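/- Let p ≥ 0 be an integer, n* > 0 with n* ≠ 1, ε > 0, and let κ : (n*−ε, n*+ε) → ℂ be a continuous ITE trajectory (F_p(κ(n), n) = 0 for all n) that is differentiable at every n ≠ n*. Suppose κ(n*) = κ* > 0 with J_p(κ*) = 0 and J_p'(κ*) ≠ 0, and that J_p(κ(n)) ≠ 0 and J_p(√n·κ(n)) ≠ 0 for every n ≠ n*. Then |κ'(n)| → ∞ as n → n*. -/

import Mathlib

open Complex Real Filter Set

/-- Bessel function of the first kind of integer order `p`. -/
noncomputable def besselJ (p : ℕ) (z : ℂ) : ℂ :=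
  ∑' m : ℕ, ((-1 : ℂ) ^ m / ((Nat.factorial m : ℂ) * (Nat.factorial (m + p) : ℂ)))
    * (z / 2) ^ (2 * m + p)

/-- Derivative of the Bessel function. -/
noncomputable def besselJ' (p : ℕ) (z : ℂ) : ℂ := deriv (besselJ p) z

/-- The ITE determinant function `F_p(κ, n)`. -/
noncomputable def Fp (p : ℕ) (κ : ℂ) (n : ℝ) : ℂ :=
  κ * (besselJ' p κ * besselJ p ((Real.sqrt n : ℂ) * κ)
    - (Real.sqrt n : ℂ) * besselJ p κ * besselJ' p ((Real.sqrt n : ℂ) * κ))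

/-!
Write `F_p(κ, n) = κ · C(√n, κ)` with `C(s, κ) = J_p'(κ) J_p(sκ) - s J_p(κ) J_p'(sκ)`. Near `n*` the
trajectory stays away from `0`, so `C(√n, κ(n)) = 0` there, and implicit differentiation gives
`∂_κ C · κ'(n) + ∂_s C · (2√n)⁻¹ = 0` for `n ≠ n*`. At `n*` both `J_p(κ*)` and (by `F_p = 0`)
`J_p(√n* κ*)` vanish, which kills `∂_κ C`, while `∂_s C` reduces to `κ* J_p'(κ*) J_p'(√n* κ*)`.
This is nonzero because the nonzero zeros of `J_p` are simple: Bessel's equation is regular away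
from `0`, so a double zero would force `J_p ≡ 0`. Hence `κ' = -(∂_s C / 2√n) / ∂_κ C` blows up.
-/

open Topology Nat

noncomputable section

theorem hasDerivAt_tsum_of_norm_le {F F' : ℕ → ℂ → ℂ} {u : ℝ → ℕ → ℝ}
    (hu : ∀ R, Summable (u R)) (hF : ∀ m z, HasDerivAt (F m) (F' m z) z)
    (hF_le : ∀ R m z, ‖z‖ ≤ R → ‖F m z‖ ≤ u R m) (z : ℂ) :
    HasDerivAt (fun w => ∑' m, F m w) (∑' m, F' m z) z := by
  set U := Metric.ball (0 : ℂ) (‖z‖ + 1)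
  have hzU : z ∈ U := by simp [U]
  have hdiff : ∀ m, DifferentiableOn ℂ (F m) U :=
    fun m w _ => (hF m w).differentiableAt.differentiableWithinAt
  have hle : ∀ m w, w ∈ U → ‖F m w‖ ≤ u (‖z‖ + 1) m := fun m w hw =>
    hF_le _ m w (by simpa [U] using (Metric.mem_ball.mp hw).le)
  have hsum := hasSum_deriv_of_summable_norm (hu _) hdiff Metric.isOpen_ball hle hzU
  simp only [fun m => (hF m z).deriv] at hsum
  rw [hsum.tsum_eq]
  exact ((differentiableOn_tsum_of_summable_norm (hu _) hdiff Metric.isOpen_ball hle)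
    |>.differentiableAt (Metric.isOpen_ball.mem_nhds hzU)).hasDerivAt

theorem descFactorial_mul_pow_sub_mul_pow {R : Type*} [CommSemiring R] (N t : ℕ) (w : R) :
    (N.descFactorial t : R) * (w ^ (N - t) * w ^ t) = N.descFactorial t * w ^ N := by
  rcases le_or_gt t N with h | h
  · rw [← pow_add, Nat.sub_add_cancel h]
  · simp [Nat.descFactorial_eq_zero_iff_lt.mpr h]

theorem tsum_add_eq_zero_of_succ_eq_neg {A B : ℕ → ℂ} (hB : Summable B) (hA₀ : A 0 = 0)
    (hAB : ∀ m, A (m + 1) = -B m) : ∑' m, (A m + B m) = 0 := by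
  have hA : Summable A := by
    rw [← summable_nat_add_iff 1]
    exact hB.neg.congr fun m => (hAB m).symm
  rw [hA.tsum_add hB, hA.tsum_eq_zero_add, hA₀, tsum_congr hAB, tsum_neg]
  ring

section SecondOrderODE

variable {𝕜 : Type*} [NontriviallyNormedField 𝕜] [CharZero 𝕜] [CompleteSpace 𝕜]

/-- If `f` had finite order `m + 2` at `z₀`, then `a * f''` would have order exactly `m` while
`b * f'` and `c * f` have order `> m`. -/
theorem AnalyticAt.analyticOrderAt_eq_top_of_ode {f a b c : 𝕜 → 𝕜} {z₀ : 𝕜}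
    (hf : AnalyticAt 𝕜 f z₀) (ha : AnalyticAt 𝕜 a z₀) (hb : AnalyticAt 𝕜 b z₀)
    (hc : AnalyticAt 𝕜 c z₀) (ha₀ : a z₀ ≠ 0)
    (hode : ∀ᶠ z in 𝓝 z₀, a z * deriv (deriv f) z + b z * deriv f z + c z * f z = 0)
    (h₀ : f z₀ = 0) (h₁ : deriv f z₀ = 0) : analyticOrderAt f z₀ = ⊤ := by
  by_contra hfin
  have htwo : 2 ≤ analyticOrderAt f z₀ := by
    simpa [one_add_one_eq_two] using (analyticOrderAt_deriv_ge_iff hf h₀ (n := 1)).mp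
      (Order.one_le_iff_ne_zero.mpr (hf.deriv.analyticOrderAt_ne_zero.mpr h₁))
  obtain ⟨k, hk⟩ := ENat.ne_top_iff_exists.mp hfin
  obtain ⟨m, rfl⟩ : ∃ m, k = m + 2 := ⟨k - 2, by rw [← hk] at htwo; norm_cast at htwo; omega⟩
  have hf' : analyticOrderAt (deriv f) z₀ = (m + 1 : ℕ) :=
    analyticOrderAt_deriv_of_pos hf (by rw [← hk]; push_cast; ring)
  have hf'' : analyticOrderAt (deriv (deriv f)) z₀ = m :=
    analyticOrderAt_deriv_of_pos hf.deriv (by rw [hf']; push_cast; ring)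
  have hA : analyticOrderAt (a * deriv (deriv f)) z₀ = m := by
    rw [analyticOrderAt_mul ha hf.deriv.deriv, ha.analyticOrderAt_eq_zero.mpr ha₀, hf'', zero_add]
  have hB : (m : ℕ∞) < analyticOrderAt (b * deriv f) z₀ := by
    rw [analyticOrderAt_mul hb hf.deriv, hf']
    exact (by exact_mod_cast m.lt_succ_self : (m : ℕ∞) < (m + 1 : ℕ)).trans_le le_add_self
  have hC : (m : ℕ∞) < analyticOrderAt (c * f) z₀ := by
    rw [analyticOrderAt_mul hc hf, ← hk]
    exact (by exact_mod_cast (by omega : m < m + 2) : (m : ℕ∞) < (m + 2 : ℕ)).trans_le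
      le_add_self
  have hAB : analyticOrderAt (a * deriv (deriv f) + b * deriv f) z₀ = m :=
    (analyticOrderAt_add_eq_left_of_lt (hA ▸ hB)).trans hA
  have hsum : analyticOrderAt (a * deriv (deriv f) + b * deriv f + c * f) z₀ = m :=
    (analyticOrderAt_add_eq_left_of_lt (hAB ▸ hC)).trans hAB
  rw [analyticOrderAt_eq_top.mpr (by simpa using hode)] at hsum
  exact ENat.top_ne_natCast m hsum

end SecondOrderODE

theorem tendsto_norm_atTop_of_mul_add_eq_zero {α 𝕜 : Type*} [NormedField 𝕜] {l : Filter α}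
    {a b x : α → 𝕜} {b₀ : 𝕜} (ha : Tendsto a l (𝓝 0)) (hb : Tendsto b l (𝓝 b₀)) (hb₀ : b₀ ≠ 0)
    (hx : ∀ᶠ y in l, a y * x y + b y = 0) : Tendsto (fun y => ‖x y‖) l atTop := by
  have hbne := hb.eventually_ne hb₀
  have hane : ∀ᶠ y in l, a y ≠ 0 := by
    filter_upwards [hx, hbne] with y hy hby hay
    exact hby (by simpa [hay] using hy)
  have hainv : Tendsto (fun y => ‖(a y)⁻¹‖) l atTop :=
    tendsto_norm_inv_nhdsNE_zero_atTop.comp (tendsto_nhdsWithin_iff.mpr ⟨ha, hane⟩)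
  refine (hb.norm.pos_mul_atTop (norm_pos_iff.mpr hb₀) hainv).congr' ?_
  filter_upwards [hx, hane] with y hy hay
  have hxy : x y = -(b y * (a y)⁻¹) := by
    field_simp
    linear_combination hy
  rw [hxy, norm_neg, norm_mul]

def besselCoeff (p m : ℕ) : ℂ := (-1) ^ m / (m ! * (m + p)! : ℂ)

theorem besselCoeff_succ (p m : ℕ) :
    ((m : ℂ) + 1) * ((m : ℂ) + 1 + p) * besselCoeff p (m + 1) = -besselCoeff p m := by
  have h₁ : ((m + 1)! : ℂ) = (m + 1) * m ! := by push_cast [Nat.factorial_succ]; ring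
  have h₂ : ((m + 1 + p)! : ℂ) = (m + 1 + p) * (m + p)! := by
    rw [show m + 1 + p = m + p + 1 by ring]; push_cast [Nat.factorial_succ]; ring
  have h₃ : ((m : ℂ) + 1 + p) ≠ 0 := by exact_mod_cast (show m + 1 + p ≠ 0 by omega)
  unfold besselCoeff
  rw [h₁, h₂, pow_succ]
  field_simp

/-- The `t`-th derivative of the `m`-th term of the series defining `besselJ p`. -/
def besselTerm (p t m : ℕ) (z : ℂ) : ℂ :=
  besselCoeff p m * (2 * m + p).descFactorial t * (z / 2) ^ (2 * m + p - t) / 2 ^ t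

theorem hasDerivAt_besselTerm (p t m : ℕ) (z : ℂ) :
    HasDerivAt (besselTerm p t m) (besselTerm p (t + 1) m z) z := by
  have h := (((hasDerivAt_pow (2 * m + p - t) (z / 2)).comp z
    ((hasDerivAt_id z).div_const 2)).const_mul
    (besselCoeff p m * (2 * m + p).descFactorial t)).div_const (2 ^ t)
  refine h.congr_deriv ?_
  simp only [besselTerm, Nat.descFactorial_succ, Nat.sub_sub, pow_succ]
  push_cast
  ring

theorem norm_besselTerm_le (p t m : ℕ) {R : ℝ} {z : ℂ} (hz : ‖z‖ ≤ R) :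
    ‖besselTerm p t m z‖ ≤ t ! * (Real.exp 1 * (R + 1)) ^ (2 * m + p) / m ! := by
  set N := 2 * m + p
  have hR : 0 ≤ R := (norm_nonneg z).trans hz
  have hcoeff : ‖besselCoeff p m‖ ≤ 1 / m ! := by
    simp only [besselCoeff, norm_div, norm_pow, norm_neg, norm_one, one_pow, norm_mul,
      Complex.norm_natCast]
    gcongr
    exact le_mul_of_one_le_right (by positivity) (by exact_mod_cast (m + p).factorial_pos)
  have hdesc : (N.descFactorial t : ℝ) ≤ t ! * Real.exp 1 ^ N := by
    rw [← Real.exp_nat_mul, mul_one]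
    calc (N.descFactorial t : ℝ) ≤ (N : ℝ) ^ t := by exact_mod_cast N.descFactorial_le_pow t
      _ ≤ t ! * Real.exp N := by
        rw [← div_le_iff₀' (by positivity)]
        exact Real.pow_div_factorial_le_exp _ (by positivity) t
  have hpow : ‖z / 2‖ ^ (N - t) ≤ (R + 1) ^ N := by
    calc ‖z / 2‖ ^ (N - t) ≤ (R + 1) ^ (N - t) := by
          gcongr; rw [norm_div, Complex.norm_ofNat]; linarith [norm_nonneg z]
      _ ≤ (R + 1) ^ N := pow_le_pow_right₀ (by linarith) (Nat.sub_le N t)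
  have hhalf : ‖(2 : ℂ) ^ t‖⁻¹ ≤ 1 := by
    rw [norm_pow, Complex.norm_ofNat]; exact inv_le_one_of_one_le₀ (one_le_pow₀ one_le_two)
  calc ‖besselTerm p t m z‖
      = ‖besselCoeff p m‖ * N.descFactorial t * ‖z / 2‖ ^ (N - t) * ‖(2 : ℂ) ^ t‖⁻¹ := by
        simp [besselTerm, N, div_eq_mul_inv]
    _ ≤ 1 / m ! * (t ! * Real.exp 1 ^ N) * (R + 1) ^ N * 1 := by gcongr
    _ = t ! * (Real.exp 1 * (R + 1)) ^ N / m ! := by rw [mul_pow]; ring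

theorem summable_besselTerm_bound (p t : ℕ) (R : ℝ) :
    Summable fun m => (t ! : ℝ) * (Real.exp 1 * (R + 1)) ^ (2 * m + p) / m ! := by
  set x := Real.exp 1 * (R + 1)
  refine ((Real.summable_pow_div_factorial (x ^ 2)).mul_left (t ! * x ^ p)).congr fun m => ?_
  rw [pow_add, pow_mul]
  ring

theorem pow_mul_besselTerm (p t m : ℕ) (z : ℂ) :
    z ^ t * besselTerm p t m z =
      besselCoeff p m * (2 * m + p).descFactorial t * (z / 2) ^ (2 * m + p) := by
  have hz : z ^ t = (z / 2) ^ t * 2 ^ t := by rw [← mul_pow, div_mul_cancel₀ z two_ne_zero]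
  have h := descFactorial_mul_pow_sub_mul_pow (2 * m + p) t (z / 2)
  rw [besselTerm, hz]
  field_simp
  linear_combination besselCoeff p m * h

def besselSeries (p t : ℕ) (z : ℂ) : ℂ := ∑' m, besselTerm p t m z

theorem hasDerivAt_besselSeries (p t : ℕ) (z : ℂ) :
    HasDerivAt (besselSeries p t) (besselSeries p (t + 1) z) z :=
  hasDerivAt_tsum_of_norm_le (summable_besselTerm_bound p t) (hasDerivAt_besselTerm p t)
    (fun _ m _ hz => norm_besselTerm_le p t m hz) z

theorem summable_besselTerm (p t : ℕ) (z : ℂ) : Summable fun m => besselTerm p t m z :=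
  .of_norm_bounded (summable_besselTerm_bound p t ‖z‖) fun m => norm_besselTerm_le p t m le_rfl

theorem besselJ_eq_besselSeries (p : ℕ) : besselJ p = besselSeries p 0 := by
  funext z
  simp [besselJ, besselSeries, besselTerm, besselCoeff]

theorem besselJ'_eq_besselSeries (p : ℕ) : besselJ' p = besselSeries p 1 := by
  funext z
  rw [besselJ', besselJ_eq_besselSeries, (hasDerivAt_besselSeries p 0 z).deriv]

theorem deriv_besselJ'_eq_besselSeries (p : ℕ) : deriv (besselJ' p) = besselSeries p 2 := by
  funext z
  rw [besselJ'_eq_besselSeries, (hasDerivAt_besselSeries p 1 z).deriv]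

theorem besselJ_ode (p : ℕ) (z : ℂ) :
    z ^ 2 * deriv (besselJ' p) z + z * besselJ' p z + (z ^ 2 - p ^ 2) * besselJ p z = 0 := by
  set A : ℕ → ℂ := fun m => 4 * m * (m + p) * besselCoeff p m * (z / 2) ^ (2 * m + p)
  set B : ℕ → ℂ := fun m => 4 * besselCoeff p m * (z / 2) ^ (2 * m + p + 2)
  have hterm : ∀ m, z ^ 2 * besselTerm p 2 m z + z * besselTerm p 1 m z
      + (z ^ 2 - p ^ 2) * besselTerm p 0 m z = A m + B m := by
    intro m
    have hdesc : ((2 * m + p).descFactorial 2 + (2 * m + p).descFactorial 1 : ℂ) =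
        (2 * m + p) ^ 2 := by
      have h : ∀ N : ℕ, N.descFactorial 2 + N.descFactorial 1 = N ^ 2 := by
        rintro (_ | N) <;> simp [Nat.descFactorial_succ]; ring
      exact_mod_cast h (2 * m + p)
    have h₀ := pow_mul_besselTerm p 0 m z
    have h₁ := pow_mul_besselTerm p 1 m z
    have h₂ := pow_mul_besselTerm p 2 m z
    simp only [pow_zero, one_mul, pow_one, Nat.descFactorial_zero, Nat.cast_one, mul_one] at h₀ h₁
    linear_combination
      h₂ + h₁ + (z ^ 2 - p ^ 2) * h₀ + besselCoeff p m * (z / 2) ^ (2 * m + p) * hdesc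
  have hB : Summable B := ((summable_besselTerm p 0 z).mul_left (4 * (z / 2) ^ 2)).congr
    fun m => by
      simp only [B, besselTerm, descFactorial_zero, cast_one, mul_one, tsub_zero, pow_zero, div_one]
      ring
  have hAB : ∀ m, A (m + 1) = -B m := fun m => by
    simp only [A, B]
    push_cast
    linear_combination (4 * (z / 2) ^ (2 * m + p + 2)) * besselCoeff_succ p m
  rw [deriv_besselJ'_eq_besselSeries, besselJ'_eq_besselSeries, besselJ_eq_besselSeries]
  simp only [besselSeries]
  rw [← tsum_mul_left, ← tsum_mul_left, ← tsum_mul_left,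
    ← ((summable_besselTerm p 2 z).mul_left _).tsum_add ((summable_besselTerm p 1 z).mul_left _),
    ← (((summable_besselTerm p 2 z).mul_left _).add
      ((summable_besselTerm p 1 z).mul_left _)).tsum_add ((summable_besselTerm p 0 z).mul_left _),
    tsum_congr hterm]
  exact tsum_add_eq_zero_of_succ_eq_neg hB (by simp [A]) hAB

theorem differentiable_besselJ (p : ℕ) : Differentiable ℂ (besselJ p) := by
  rw [besselJ_eq_besselSeries]
  exact fun z => (hasDerivAt_besselSeries p 0 z).differentiableAt

theorem hasDerivAt_besselJ (p : ℕ) (z : ℂ) : HasDerivAt (besselJ p) (besselJ' p z) z :=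
  (differentiable_besselJ p z).hasDerivAt

theorem hasDerivAt_besselJ' (p : ℕ) (z : ℂ) :
    HasDerivAt (besselJ' p) (deriv (besselJ' p) z) z := by
  rw [besselJ'_eq_besselSeries]
  exact (hasDerivAt_besselSeries p 1 z).differentiableAt.hasDerivAt

theorem continuous_deriv_besselJ' (p : ℕ) : Continuous (deriv (besselJ' p)) := by
  rw [deriv_besselJ'_eq_besselSeries]
  exact continuous_iff_continuousAt.mpr fun z => (hasDerivAt_besselSeries p 2 z).continuousAt

theorem besselJ'_ne_zero_of_besselJ_eq_zero {p : ℕ} (hJ : besselJ p ≠ 0) {z : ℂ} (hz : z ≠ 0)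
    (hJz : besselJ p z = 0) : besselJ' p z ≠ 0 := by
  intro hJ'z
  have hanalytic : AnalyticOnNhd ℂ (besselJ p) univ :=
    fun w _ => (differentiable_besselJ p).analyticAt w
  have htop : analyticOrderAt (besselJ p) z = ⊤ :=
    (hanalytic z trivial).analyticOrderAt_eq_top_of_ode (a := fun w : ℂ => w ^ 2) (b := id)
      (c := fun w : ℂ => w ^ 2 - p ^ 2) (by fun_prop) (by fun_prop) (by fun_prop)
      (pow_ne_zero 2 hz) (.of_forall (besselJ_ode p)) hJz hJ'z
  exact hJ (funext fun w => hanalytic.eqOn_zero_of_preconnected_of_eventuallyEq_zero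
    isPreconnected_univ trivial (analyticOrderAt_eq_top.mp htop) trivial)

section BesselCross

variable (p : ℕ)

def besselCross (s κ : ℂ) : ℂ :=
  besselJ' p κ * besselJ p (s * κ) - s * besselJ p κ * besselJ' p (s * κ)

def besselCrossDerivκ (s κ : ℂ) : ℂ :=
  deriv (besselJ' p) κ * besselJ p (s * κ) - s ^ 2 * besselJ p κ * deriv (besselJ' p) (s * κ)

def besselCrossDerivs (s κ : ℂ) : ℂ :=
  κ * besselJ' p κ * besselJ' p (s * κ) - besselJ p κ * besselJ' p (s * κ)
    - s * κ * besselJ p κ * deriv (besselJ' p) (s * κ)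

theorem Fp_eq_mul_besselCross (κ : ℂ) (n : ℝ) : Fp p κ n = κ * besselCross p (√n) κ := rfl

variable {p}

theorem hasDerivAt_besselCross {s κ : ℝ → ℂ} {s' κ' : ℂ} {x : ℝ} (hs : HasDerivAt s s' x)
    (hκ : HasDerivAt κ κ' x) :
    HasDerivAt (fun y => besselCross p (s y) (κ y))
      (besselCrossDerivκ p (s x) (κ x) * κ' + besselCrossDerivs p (s x) (κ x) * s') x := by
  have hsκ := hs.mul hκ
  have h := (((hasDerivAt_besselJ' p _).comp x hκ).mul
      ((hasDerivAt_besselJ p _).comp x hsκ)).sub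
    ((hs.mul ((hasDerivAt_besselJ p _).comp x hκ)).mul ((hasDerivAt_besselJ' p _).comp x hsκ))
  refine h.congr_deriv ?_
  simp only [besselCrossDerivκ, besselCrossDerivs, Function.comp_apply, Pi.mul_apply]
  ring

variable (p)

theorem continuous_besselCrossDerivκ :
    Continuous fun q : ℂ × ℂ => besselCrossDerivκ p q.1 q.2 := by
  have := (differentiable_besselJ p).continuous
  have := continuous_deriv_besselJ' p
  unfold besselCrossDerivκ
  fun_prop

theorem continuous_besselCrossDerivs :
    Continuous fun q : ℂ × ℂ => besselCrossDerivs p q.1 q.2 := by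
  have := (differentiable_besselJ p).continuous
  have : Continuous (besselJ' p) := continuous_iff_continuousAt.mpr fun z =>
    (hasDerivAt_besselJ' p z).continuousAt
  have := continuous_deriv_besselJ' p
  unfold besselCrossDerivs
  fun_prop

end BesselCross

theorem besselCrossDerivκ_mul_deriv_add_eq_zero {p : ℕ} {κ : ℝ → ℂ} {n : ℝ} (hn : 0 < n)
    (hκ : DifferentiableAt ℝ κ n) (hcross : ∀ᶠ y in 𝓝 n, besselCross p (√y) (κ y) = 0) :
    besselCrossDerivκ p (√n) (κ n) * deriv κ n
      + besselCrossDerivs p (√n) (κ n) / (2 * √n) = 0 := by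
  have hs : HasDerivAt (fun y : ℝ => (√y : ℂ)) (1 / (2 * √n)) n := by
    simpa using (Real.hasDerivAt_sqrt hn.ne').ofReal_comp
  have hzero : HasDerivAt (fun y => besselCross p (√y) (κ y)) 0 n :=
    (hasDerivAt_const n 0).congr_of_eventuallyEq hcross
  have h := (hasDerivAt_besselCross hs hκ.hasDerivAt).unique hzero
  rwa [mul_one_div] at h

end

theorem stmt_6_general (p : ℕ) (nst : ℝ) (hnst : 0 < nst) (ε : ℝ) (hε : 0 < ε)
    (κ : ℝ → ℂ) (hcont : ContinuousOn κ (Set.Ioo (nst - ε) (nst + ε)))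
    (hF : ∀ n ∈ Set.Ioo (nst - ε) (nst + ε), Fp p (κ n) n = 0)
    (hdiff : ∀ n ∈ Set.Ioo (nst - ε) (nst + ε), n ≠ nst → DifferentiableAt ℝ κ n)
    (κs : ℝ) (hκs : 0 < κs) (hval : κ nst = (κs : ℂ))
    (hJ : besselJ p (κs : ℂ) = 0) (hJ' : besselJ' p (κs : ℂ) ≠ 0) :
    Filter.Tendsto (fun n => ‖deriv κ n‖)
      (nhdsWithin nst (Set.Ioo (nst - ε) (nst + ε) \ {nst})) Filter.atTop := by
  set I := Ioo (nst - ε) (nst + ε)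
  set s : ℝ → ℂ := fun n => (√n : ℂ)
  have hnstI : nst ∈ I := ⟨by linarith, by linarith⟩
  have hκs₀ : (κs : ℂ) ≠ 0 := by exact_mod_cast hκs.ne'
  have hs₀ : s nst ≠ 0 := by simpa [s] using (Real.sqrt_pos.mpr hnst).ne'
  have hJs : besselJ p (s nst * κs) = 0 := by
    simpa [Fp_eq_mul_besselCross, besselCross, hval, hJ, hκs₀, hJ'] using hF nst hnstI
  have hJ's : besselJ' p (s nst * κs) ≠ 0 :=
    besselJ'_ne_zero_of_besselJ_eq_zero (fun h => hJ' (by simp [besselJ', h]))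
      (mul_ne_zero hs₀ hκs₀) hJs
  have hκ : Tendsto κ (𝓝 nst) (𝓝 κs) := hval ▸ hcont.continuousAt (isOpen_Ioo.mem_nhds hnstI)
  have hq : Tendsto (fun n => (s n, κ n)) (𝓝 nst) (𝓝 (s nst, κs)) :=
    ((by fun_prop : Continuous s).tendsto nst).prodMk_nhds hκ
  have hcross : ∀ᶠ n in 𝓝 nst, 0 < n ∧ besselCross p (s n) (κ n) = 0 := by
    filter_upwards [isOpen_Ioo.eventually_mem hnstI, lt_mem_nhds hnst,
      hκ.eventually_ne hκs₀] with n hnI hn hκn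
    exact ⟨hn, (mul_eq_zero.mp (hF n hnI)).resolve_left hκn⟩
  have hident : ∀ᶠ n in 𝓝[I \ {nst}] nst, besselCrossDerivκ p (s n) (κ n) * deriv κ n
      + besselCrossDerivs p (s n) (κ n) / (2 * s n) = 0 := by
    filter_upwards [nhdsWithin_le_nhds hcross.eventually_nhds, self_mem_nhdsWithin] with n hn hnI
    exact besselCrossDerivκ_mul_deriv_add_eq_zero hn.self_of_nhds.1 (hdiff n hnI.1 hnI.2)
      (hn.mono fun _ => And.right)
  refine tendsto_norm_atTop_of_mul_add_eq_zero
    (b₀ := besselCrossDerivs p (s nst) κs / (2 * s nst)) ?_ ?_ ?_ hident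
  · have hlim := ((continuous_besselCrossDerivκ p).tendsto _).comp hq
    rw [show besselCrossDerivκ p (s nst) κs = 0 by simp [besselCrossDerivκ, hJ, hJs]] at hlim
    exact hlim.mono_left nhdsWithin_le_nhds
  · exact (((continuous_besselCrossDerivs p).tendsto _).comp hq |>.div
      ((by fun_prop : Continuous s).tendsto nst |>.const_mul 2) (mul_ne_zero two_ne_zero hs₀))
      |>.mono_left nhdsWithin_le_nhds
  · simp [besselCrossDerivs, hJ, hκs₀, hJ', hJ's, hs₀]

/-- the trajectory derivative blows up at an IDE. -/
theorem stmt_6 (p : ℕ) (nst : ℝ) (hnst : 0 < nst) (hnst1 : nst ≠ 1) (ε : ℝ) (hε : 0 < ε)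
    (κ : ℝ → ℂ) (hcont : ContinuousOn κ (Set.Ioo (nst - ε) (nst + ε)))
    (hF : ∀ n ∈ Set.Ioo (nst - ε) (nst + ε), Fp p (κ n) n = 0)
    (hdiff : ∀ n ∈ Set.Ioo (nst - ε) (nst + ε), n ≠ nst → DifferentiableAt ℝ κ n)
    (κs : ℝ) (hκs : 0 < κs) (hval : κ nst = (κs : ℂ))
    (hJ : besselJ p (κs : ℂ) = 0) (hJ' : besselJ' p (κs : ℂ) ≠ 0)
    (hJne : ∀ n ∈ Set.Ioo (nst - ε) (nst + ε), n ≠ nst →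
      besselJ p (κ n) ≠ 0 ∧ besselJ p ((Real.sqrt n : ℂ) * κ n) ≠ 0) :
    Filter.Tendsto (fun n => ‖deriv κ n‖)
      (nhdsWithin nst (Set.Ioo (nst - ε) (nst + ε) \ {nst})) Filter.atTop :=
  stmt_6_general p nst hnst ε hε κ hcont hF hdiff κs hκs hval hJ hJ'
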